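/- Let (s,α) with s > 0 and α > 0, let g ∈ ℓ², and let g' be any sequence in ℓ². Define u := (α g_k/(α + |k|^{2s}))_k and u' := (α g'_k/(α + |k|^{2s}))_k. Then the stability estimate |u − u'|_s ≤ α |g − g'|_{−s} holds (in particular with g' = P_n g the truncation of g to modes in ℤ_n^d). -/

import Mathlib

open scoped BigOperators
open Filter

noncomputable section

/-- Index set `ℤ^d \ {0}` of nonzero frequencies. -/
abbrev K (d : ℕ) : Type := {k : Fin d → ℤ // k ≠ 0}

/-- Euclidean norm `|k|` of a frequency `k ∈ ℤ^d \ {0}`. -/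
noncomputable def nrm {d : ℕ} (k : K d) : ℝ := Real.sqrt (∑ i : Fin d, ((k.1 i : ℝ)) ^ 2)

/-- Squared fractional Sobolev seminorm `|u|_s² = Σ_k |k|^{2s} |u_k|²`. -/
noncomputable def HnormSq {d : ℕ} (s : ℝ) (u : K d → ℂ) : ℝ :=
  ∑' k : K d, nrm k ^ (2 * s) * ‖u k‖ ^ 2

/-- `u ∈ ℓ²`, i.e. `‖u‖ = |u|_0 < ∞`. -/
def MemL2 {d : ℕ} (u : K d → ℂ) : Prop := Summable fun k : K d => ‖u k‖ ^ 2

/-- `|u|_s < ∞`. -/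
def MemHs {d : ℕ} (s : ℝ) (u : K d → ℂ) : Prop :=
  Summable fun k : K d => nrm k ^ (2 * s) * ‖u k‖ ^ 2

end

/-! Mode by mode, `|k|^{2s} |u_k - u'_k|² = α² |k|^{-2s} |g_k - g'_k|² · (|k|^{2s} / (α + |k|^{2s}))²`,
and the last factor is at most `1`. Summing over `k` gives the estimate; the right-hand side is
summable because `|k| ≥ 1` and `s > 0` put the `ℓ²` sequence `g - g'` into `H^{-s}`. -/

lemma one_le_nrm {d : ℕ} (k : K d) : 1 ≤ nrm k := by
  obtain ⟨i, hi⟩ := Function.ne_iff.mp k.2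
  have hi : (1 : ℤ) ≤ k.1 i ^ 2 := by
    rw [← sq_abs]; exact one_le_pow₀ (Int.one_le_abs hi)
  refine Real.one_le_sqrt.mpr ?_
  calc (1 : ℝ) ≤ (k.1 i : ℝ) ^ 2 := by exact_mod_cast hi
    _ ≤ ∑ j, (k.1 j : ℝ) ^ 2 :=
      Finset.single_le_sum (f := fun j => (k.1 j : ℝ) ^ 2) (fun j _ => sq_nonneg _)
        (Finset.mem_univ i)

lemma nrm_pos {d : ℕ} (k : K d) : 0 < nrm k := one_pos.trans_le (one_le_nrm k)

lemma rpow_nrm_mul_sq_nonneg {d : ℕ} (t : ℝ) (k : K d) (z : ℂ) : 0 ≤ nrm k ^ t * ‖z‖ ^ 2 :=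
  mul_nonneg (Real.rpow_nonneg (nrm_pos k).le t) (sq_nonneg _)

lemma MemL2.sub {d : ℕ} {u v : K d → ℂ} (hu : MemL2 u) (hv : MemL2 v) : MemL2 (u - v) := by
  refine Summable.of_nonneg_of_le (fun k => sq_nonneg _) (fun k => ?_) ((hu.add hv).mul_left 2)
  calc ‖u k - v k‖ ^ 2 ≤ (‖u k‖ + ‖v k‖) ^ 2 := by gcongr; exact norm_sub_le _ _
    _ ≤ 2 * (‖u k‖ ^ 2 + ‖v k‖ ^ 2) := add_sq_le

lemma MemL2.memHs {d : ℕ} {t : ℝ} {u : K d → ℂ} (hu : MemL2 u) (ht : t ≤ 0) : MemHs t u :=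
  Summable.of_nonneg_of_le (fun k => rpow_nrm_mul_sq_nonneg _ k _)
    (fun k => mul_le_of_le_one_left (sq_nonneg _)
      (Real.rpow_le_one_of_one_le_of_nonpos (one_le_nrm k) (by linarith))) hu

lemma HnormSq_le_mul_of_le {d : ℕ} {s t c : ℝ} {u v : K d → ℂ} (hv : MemHs t v)
    (h : ∀ k, nrm k ^ (2 * s) * ‖u k‖ ^ 2 ≤ c * (nrm k ^ (2 * t) * ‖v k‖ ^ 2)) :
    HnormSq s u ≤ c * HnormSq t v := by
  have hcv : Summable fun k => c * (nrm k ^ (2 * t) * ‖v k‖ ^ 2) := hv.mul_left c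
  rw [HnormSq, HnormSq, ← tsum_mul_left]
  exact (hcv.of_nonneg_of_le (fun k => rpow_nrm_mul_sq_nonneg _ k _) h).tsum_le_tsum h hcv

lemma mul_sq_div_add_le {a c x : ℝ} (ha : 0 < a) (hc : 0 ≤ c) :
    a * (c * x / (c + a)) ^ 2 ≤ c ^ 2 * (a⁻¹ * x ^ 2) := by
  have hfrac : a / (c + a) ^ 2 ≤ a⁻¹ := by
    rw [div_le_iff₀ (by positivity), inv_mul_eq_div, le_div_iff₀ ha]; nlinarith
  calc a * (c * x / (c + a)) ^ 2 = c ^ 2 * x ^ 2 * (a / (c + a) ^ 2) := by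
        rw [div_pow, mul_pow]; ring
    _ ≤ c ^ 2 * x ^ 2 * a⁻¹ := by gcongr
    _ = c ^ 2 * (a⁻¹ * x ^ 2) := by ring

lemma norm_ofReal_mul_div_ofReal {a r : ℝ} (ha : 0 ≤ a) (hr : 0 ≤ r) (z : ℂ) :
    ‖(a : ℂ) * z / (r : ℂ)‖ = a * ‖z‖ / r := by
  rw [norm_div, norm_mul, Complex.norm_of_nonneg ha, Complex.norm_of_nonneg hr]

theorem stmt_9_general (d : ℕ) (s α : ℝ) (hs : 0 < s) (hα : 0 < α)
    (g g' : K d → ℂ) (hg : MemL2 g) (hg' : MemL2 g')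
    (u u' : K d → ℂ)
    (hu : ∀ k : K d, u k = (α : ℂ) * g k / ((α + nrm k ^ (2 * s) : ℝ) : ℂ))
    (hu' : ∀ k : K d, u' k = (α : ℂ) * g' k / ((α + nrm k ^ (2 * s) : ℝ) : ℂ)) :
    Real.sqrt (HnormSq s (u - u')) ≤ α * Real.sqrt (HnormSq (-s) (g - g')) := by
  have hbound : HnormSq s (u - u') ≤ α ^ 2 * HnormSq (-s) (g - g') := by
    refine HnormSq_le_mul_of_le ((hg.sub hg').memHs (by linarith)) fun k => ?_
    have hk : 0 < nrm k ^ (2 * s) := Real.rpow_pos_of_pos (nrm_pos k) _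
    have hdiff : (u - u') k = α * (g - g') k / ((α + nrm k ^ (2 * s) : ℝ) : ℂ) := by
      simp only [Pi.sub_apply, hu, hu']; ring
    rw [hdiff, norm_ofReal_mul_div_ofReal hα.le (by positivity), mul_neg,
      Real.rpow_neg (nrm_pos k).le]
    exact mul_sq_div_add_le hk hα.le
  calc Real.sqrt (HnormSq s (u - u')) ≤ Real.sqrt (α ^ 2 * HnormSq (-s) (g - g')) :=
        Real.sqrt_le_sqrt hbound
    _ = α * Real.sqrt (HnormSq (-s) (g - g')) := by
      rw [Real.sqrt_mul (sq_nonneg α), Real.sqrt_sq hα.le]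

/-- stability estimate `|u − u'|_s ≤ α |g − g'|_{−s}` for the solutions
`u = (α g_k/(α+|k|^{2s}))_k` and `u' = (α g'_k/(α+|k|^{2s}))_k` associated with data
`g` and `g'` (in particular `g' = P_n g`). -/
theorem stmt_9 (d : ℕ) (hd : 1 ≤ d) (s α : ℝ) (hs : 0 < s) (hα : 0 < α)
    (g g' : K d → ℂ) (hg : MemL2 g) (hg' : MemL2 g')
    (u u' : K d → ℂ)
    (hu : ∀ k : K d, u k = (α : ℂ) * g k / ((α + nrm k ^ (2 * s) : ℝ) : ℂ))
    (hu' : ∀ k : K d, u' k = (α : ℂ) * g' k / ((α + nrm k ^ (2 * s) : ℝ) : ℂ)) :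
    Real.sqrt (HnormSq s (u - u')) ≤ α * Real.sqrt (HnormSq (-s) (g - g')) :=
  stmt_9_general d s α hs hα g g' hg hg' u u' hu hu'
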